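/- arXiv:1702.08841 — 5 statements merged into one kernel-verified Lean document; each statement's English description precedes it below -/
import Mathlib

section
/- The image of the map f ↦ ∫f, from finitely supported functions X →₀ S to S-valued measures on X, is dense in the space Meas_S(X) with the topology of pointwise convergence. -/
open TopologicalSpace

/-- An `S`-valued measure on a topological space `X`: a finitely additive function from
the Boolean algebra of clopen subsets of `X` to `S`. -/
def IsSMeasure (S : Type*) [Semiring S] (X : Type*) [TopologicalSpace X]
    (μ : Clopens X → S) : Prop :=
  μ ⊥ = 0 ∧ ∀ K L : Clopens X, K ⊓ L = ⊥ → μ (K ⊔ L) = μ K + μ L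

/-- The space `Meas_S(X)` of all `S`-valued measures on `X`, topologized as a subspace of
the product space `Clopens X → S` (with `S` carrying a topology, which below is assumed
to be the discrete one). -/
abbrev SMeas (S : Type*) [Semiring S] [TopologicalSpace S]
    (X : Type*) [TopologicalSpace X] : Type _ :=
  {μ : Clopens X → S // IsSMeasure S X μ}

open scoped Classical in
/-- The integral `∫ f` of a finitely supported function `f : X →₀ S`: the `S`-valued
measure sending a clopen `K` to `Σ_{x ∈ K} f x`. -/
noncomputable def sInt {S : Type*} [Semiring S] {X : Type*} [TopologicalSpace X]
    (f : X →₀ S) (K : Clopens X) : S :=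
  ∑ x ∈ f.support, if x ∈ K then f x else 0

open scoped Classical

lemma Clopens.mem_sup' {X : Type*} [TopologicalSpace X] {K L : Clopens X} {x : X} :
    x ∈ K ⊔ L ↔ x ∈ K ∨ x ∈ L := by
  simp [← SetLike.mem_coe]

lemma Clopens.mem_inf' {X : Type*} [TopologicalSpace X] {K L : Clopens X} {x : X} :
    x ∈ K ⊓ L ↔ x ∈ K ∧ x ∈ L := by
  simp [← SetLike.mem_coe]

lemma Clopens.mem_compl' {X : Type*} [TopologicalSpace X] {K : Clopens X} {x : X} :
    x ∈ Kᶜ ↔ x ∉ K := by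
  simp [← SetLike.mem_coe]

lemma Clopens.not_mem_bot' {X : Type*} [TopologicalSpace X] {x : X} :
    x ∉ (⊥ : Clopens X) := by
  simp [← SetLike.mem_coe]

lemma Clopens.mem_finset_inf {ι X : Type*} [TopologicalSpace X] {s : Finset ι}
    {g : ι → Clopens X} {x : X} : x ∈ s.inf g ↔ ∀ i ∈ s, x ∈ g i := by
  induction s using Finset.induction with
  | empty => simp [← SetLike.mem_coe]
  | @insert a s h ih => rw [Finset.inf_insert, Clopens.mem_inf', ih]; simp

lemma Clopens.mem_finset_sup {ι X : Type*} [TopologicalSpace X] {s : Finset ι}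
    {g : ι → Clopens X} {x : X} : x ∈ s.sup g ↔ ∃ i ∈ s, x ∈ g i := by
  induction s using Finset.induction with
  | empty => simp [← SetLike.mem_coe]
  | @insert a s h ih => rw [Finset.sup_insert, Clopens.mem_sup', ih]; simp

lemma isSMeasure_finset_sum {S X : Type*} [Semiring S] [TopologicalSpace X] {μ : Clopens X → S}
    (hμ : IsSMeasure S X μ) {ι : Type*} (s : Finset ι) (g : ι → Clopens X)
    (hd : ∀ i ∈ s, ∀ j ∈ s, i ≠ j → g i ⊓ g j = ⊥) :
    μ (s.sup g) = ∑ i ∈ s, μ (g i) := by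
  induction s using Finset.induction with
  | empty => simpa using hμ.1
  | @insert a s h ih =>
    have hbot : g a ⊓ s.sup g = ⊥ := by
      ext x
      simp only [← SetLike.mem_coe, Clopens.coe_inf, Clopens.coe_bot, Set.mem_inter_iff,
        Set.mem_empty_iff_false, iff_false, not_and, SetLike.mem_coe]
      intro hxa hxs
      obtain ⟨i, hi, hxi⟩ := Clopens.mem_finset_sup.mp hxs
      have hb := hd a (Finset.mem_insert_self a s) i (Finset.mem_insert_of_mem hi)
        (by rintro rfl; exact h hi)
      exact Clopens.not_mem_bot' (hb ▸ Clopens.mem_inf'.mpr ⟨hxa, hxi⟩)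
    rw [Finset.sup_insert, Finset.sum_insert h, hμ.2 _ _ hbot,
      ih (fun i hi j hj hij => hd i (Finset.mem_insert_of_mem hi) j
        (Finset.mem_insert_of_mem hj) hij)]

lemma sInt_eq_sum {S : Type*} [Semiring S] {X : Type*} [TopologicalSpace X]
    (f : X →₀ S) (K : Clopens X) :
    sInt f K = f.sum (fun x a => if x ∈ K then a else 0) := by
  rw [sInt, Finsupp.sum]

lemma sInt_zero {S : Type*} [Semiring S] {X : Type*} [TopologicalSpace X] (K : Clopens X) :
    sInt (0 : X →₀ S) K = 0 := by simp [sInt]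

lemma sInt_add {S : Type*} [Semiring S] {X : Type*} [TopologicalSpace X]
    (f g : X →₀ S) (K : Clopens X) : sInt (f + g) K = sInt f K + sInt g K := by
  simp only [sInt_eq_sum]
  exact Finsupp.sum_add_index' (fun x => by simp) (fun x a b => by split <;> simp)

lemma sInt_single {S : Type*} [Semiring S] {X : Type*} [TopologicalSpace X]
    (x : X) (a : S) (K : Clopens X) :
    sInt (Finsupp.single x a) K = if x ∈ K then a else 0 := by
  rw [sInt_eq_sum]
  exact Finsupp.sum_single_index (by simp)

lemma sInt_finset_sum {S : Type*} [Semiring S] {X : Type*} [TopologicalSpace X]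
    {ι : Type*} (s : Finset ι) (g : ι → (X →₀ S)) (K : Clopens X) :
    sInt (∑ i ∈ s, g i) K = ∑ i ∈ s, sInt (g i) K := by
  induction s using Finset.induction with
  | empty => simp [sInt_zero]
  | @insert a s h ih => rw [Finset.sum_insert h, sInt_add, ih, Finset.sum_insert h]

lemma sInt_isSMeasure {S : Type*} [Semiring S] {X : Type*} [TopologicalSpace X]
    (f : X →₀ S) : IsSMeasure S X (sInt f) := by
  constructor
  · simp [sInt, Clopens.not_mem_bot']
  · intro K L hKL
    rw [sInt, sInt, sInt, ← Finset.sum_add_distrib]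
    refine Finset.sum_congr rfl fun x _ => ?_
    have hx : ¬(x ∈ K ∧ x ∈ L) := fun ⟨h1, h2⟩ =>
      Clopens.not_mem_bot' (hKL ▸ Clopens.mem_inf'.mpr ⟨h1, h2⟩)
    by_cases h1 : x ∈ K <;> by_cases h2 : x ∈ L <;>
      simp [Clopens.mem_sup', h1, h2] <;> tauto

/-- The image of the map `f ↦ ∫ f`, from finitely supported functions
`X →₀ S` to `S`-valued measures on `X`, is dense in the space `Meas_S(X)` with the topology
of pointwise convergence. -/
theorem sInt_denseRange (S X : Type*) [CommSemiring S] [Finite S]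
    [TopologicalSpace S] [DiscreteTopology S]
    [TopologicalSpace X] [CompactSpace X] [T2Space X] [TotallyDisconnectedSpace X] :
    Dense {μ : SMeas S X | ∃ f : X →₀ S, ∀ K : Clopens X, μ.1 K = sInt f K} := by
  classical
  rw [dense_iff_inter_open]
  rintro U hU ⟨μ, hμU⟩
  obtain ⟨V, hV, rfl⟩ := isOpen_induced_iff.mp hU
  obtain ⟨I, u, hu, hsub⟩ := isOpen_pi_iff.mp hV μ.1 hμU
  -- atoms
  set β := ({K // K ∈ I} → Bool) with hβ
  set A : β → Clopens X := fun b => Finset.univ.inf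
    (fun K : {K // K ∈ I} => if b K then K.1 else K.1ᶜ) with hA
  have memA : ∀ (b : β) (x : X), x ∈ A b ↔ ∀ K : {K // K ∈ I}, (x ∈ K.1 ↔ b K = true) := by
    intro b x
    rw [hA, Clopens.mem_finset_inf]
    constructor
    · intro h K
      have := h K (Finset.mem_univ K)
      revert this
      cases hb : b K <;> simp [Clopens.mem_compl', hb]
    · intro h K _
      cases hb : b K <;> simp [Clopens.mem_compl', hb, h K]
  -- pattern of a point
  have pat_mem : ∀ x : X, x ∈ A (fun K => decide (x ∈ K.1)) := by
    intro x
    rw [memA]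
    intro K
    simp
  -- atoms disjoint
  have hdisj : ∀ b b' : β, b ≠ b' → A b ⊓ A b' = ⊥ := by
    intro b b' hne
    ext x
    simp only [← SetLike.mem_coe, Clopens.coe_inf, Clopens.coe_bot, Set.mem_inter_iff,
      Set.mem_empty_iff_false, iff_false, not_and, SetLike.mem_coe]
    intro h1 h2
    exact absurd (funext fun K => by
      have e1 := (memA b x).mp h1 K
      have e2 := (memA b' x).mp h2 K
      cases hb : b K <;> cases hb' : b' K <;> simp_all) hne
  -- decomposition of K ∈ I into atoms
  have hdecomp : ∀ (K : Clopens X) (hK : K ∈ I),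
      K = (Finset.univ.filter (fun b : β => b ⟨K, hK⟩ = true)).sup A := by
    intro K hK
    ext x
    simp only [← SetLike.mem_coe, SetLike.mem_coe, Clopens.mem_finset_sup, Finset.mem_filter,
      Finset.mem_univ, true_and]
    constructor
    · intro hx
      exact ⟨fun L => decide (x ∈ L.1), by simp [hx], pat_mem x⟩
    · rintro ⟨b, hb, hxb⟩
      exact ((memA b x).mp hxb ⟨K, hK⟩).mpr hb
  -- the approximating function
  set f : X →₀ S := ∑ b : β, if h : ((A b : Set X)).Nonempty
    then Finsupp.single h.choose (μ.1 (A b)) else 0 with hf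
  have key : ∀ K ∈ I, sInt f K = μ.1 K := by
    intro K hK
    rw [hf, sInt_finset_sum]
    have step : ∀ b : β,
        sInt (if h : ((A b : Set X)).Nonempty then Finsupp.single h.choose (μ.1 (A b)) else 0) K
        = if b ⟨K, hK⟩ = true then μ.1 (A b) else 0 := by
      intro b
      by_cases h : ((A b : Set X)).Nonempty
      · rw [dif_pos h, sInt_single]
        have hmem : h.choose ∈ A b := h.choose_spec
        have := (memA b h.choose).mp hmem ⟨K, hK⟩
        by_cases hb : b ⟨K, hK⟩ = true
        · rw [if_pos (this.mpr hb), if_pos hb]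
        · rw [if_neg (fun hx => hb (this.mp hx)), if_neg hb]
      · rw [dif_neg h, sInt_zero]
        have hAb : A b = ⊥ := by
          ext x
          simp only [← SetLike.mem_coe, Clopens.coe_bot, Set.mem_empty_iff_false, iff_false]
          exact fun hx => h ⟨x, hx⟩
        rw [hAb, μ.2.1]
        simp
    rw [Finset.sum_congr rfl (fun b _ => step b), ← Finset.sum_filter,
      ← isSMeasure_finset_sum μ.2 _ A
        (fun i _ j _ hij => hdisj i j hij), ← hdecomp K hK]
  refine ⟨⟨sInt f, sInt_isSMeasure f⟩, ?_, ⟨f, fun K => rfl⟩⟩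
  apply hsub
  rw [Set.mem_pi]
  intro K hK
  show sInt f K ∈ u K
  rw [key K hK]
  exact (hu K hK).2
end

section
/- Let M be a set and h : M → X a function whose image is dense in X. Then the map from finitely supported functions M →₀ S to Meas_S(X) sending f to the measure K ↦ Σ_{m : h(m) ∈ K} f(m) (equivalently, to Σ_m f(m)·δ_{h(m)}) has dense image in Meas_S(X). -/
open TopologicalSpace

section Aux
variable {X : Type*} [TopologicalSpace X]

lemma clopens_mem_finset_inf {ι : Type*} (s : Finset ι) (f : ι → Clopens X) (x : X) :
    x ∈ s.inf f ↔ ∀ i ∈ s, x ∈ f i := by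
  classical
  induction s using Finset.induction_on with
  | empty => simp [← SetLike.mem_coe]
  | @insert a s ha ih =>
    simp only [Finset.inf_insert, Finset.mem_insert, ← SetLike.mem_coe] at *
    simp [Clopens.coe_inf, ih]

lemma clopens_mem_finset_sup {ι : Type*} (s : Finset ι) (f : ι → Clopens X) (x : X) :
    x ∈ s.sup f ↔ ∃ i ∈ s, x ∈ f i := by
  classical
  induction s using Finset.induction_on with
  | empty => simp [← SetLike.mem_coe]
  | @insert a s ha ih =>
    simp only [Finset.sup_insert, Finset.mem_insert, ← SetLike.mem_coe] at *
    simp [Clopens.coe_sup, ih]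

lemma clopens_le_iff {K L : Clopens X} : K ≤ L ↔ ∀ x, x ∈ K → x ∈ L := Iff.rfl

lemma measure_finset_sup {S : Type*} [Semiring S] {μ : Clopens X → S}
    (hμ : IsSMeasure S X μ) {ι : Type*} (s : Finset ι) (f : ι → Clopens X)
    (hdisj : ∀ i ∈ s, ∀ j ∈ s, i ≠ j → f i ⊓ f j = ⊥) :
    μ (s.sup f) = ∑ i ∈ s, μ (f i) := by
  classical
  induction s using Finset.induction_on with
  | empty => simpa using hμ.1
  | @insert a s ha ih =>
    rw [Finset.sup_insert, Finset.sum_insert ha, hμ.2, ih]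
    · intro i hi j hj hij
      exact hdisj i (Finset.mem_insert_of_mem hi) j (Finset.mem_insert_of_mem hj) hij
    · rw [← disjoint_iff, Finset.disjoint_sup_right]
      intro i hi
      rw [disjoint_iff]
      exact hdisj a (Finset.mem_insert_self a s) i (Finset.mem_insert_of_mem hi)
        (fun e => ha (e ▸ hi))
end Aux

set_option maxHeartbeats 1000000 in
open scoped Classical in
/-- Let `M` be a set and `h : M → X` a function with dense image.  Then the
map from finitely supported functions `M →₀ S` to `Meas_S(X)` sending `f` to the measure
`K ↦ Σ_{m : h m ∈ K} f m` (i.e. to `Σ_m f m • δ_{h m}`) has dense image in `Meas_S(X)`. -/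
theorem sMeas_dense_of_denseRange (S X : Type*) [CommSemiring S] [Finite S]
    [TopologicalSpace S] [DiscreteTopology S]
    [TopologicalSpace X] [CompactSpace X] [T2Space X] [TotallyDisconnectedSpace X]
    (M : Type*) (h : M → X) (hd : DenseRange h) :
    Dense {μ : SMeas S X | ∃ f : M →₀ S,
      ∀ K : Clopens X, μ.1 K = ∑ m ∈ f.support, if h m ∈ K then f m else 0} := by
  rw [dense_iff_inter_open]
  rintro U hU ⟨μ, hμU⟩
  rw [isOpen_induced_iff] at hU
  obtain ⟨V, hV, rfl⟩ := hU
  rw [isOpen_pi_iff] at hV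
  obtain ⟨I, u, hu, hsub⟩ := hV μ.1 hμU
  -- cells of the partition generated by I
  set cell : ({K // K ∈ I} → Bool) → Clopens X := fun ε =>
    I.attach.inf fun K => if ε K then (K : Clopens X) else (K : Clopens X)ᶜ with hcell
  have hmemcell : ∀ (ε) (x : X), x ∈ cell ε ↔ ∀ K : {K // K ∈ I},
      (if ε K then x ∈ (K : Clopens X) else x ∉ (K : Clopens X)) := by
    intro ε x
    rw [hcell, clopens_mem_finset_inf]
    constructor
    · intro hx K
      have := hx K (Finset.mem_attach _ _)
      by_cases hb : ε K <;> simp [hb] at this ⊢ <;>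
        simpa [← SetLike.mem_coe] using this
    · intro hx K _
      have := hx K
      by_cases hb : ε K <;> simp [hb] at this ⊢ <;>
        simpa [← SetLike.mem_coe] using this
  have hpat : ∀ x : X, x ∈ cell (fun K => decide (x ∈ (K : Clopens X))) := by
    intro x
    rw [hmemcell]
    intro K
    by_cases hx : x ∈ (K : Clopens X) <;> simp [hx]
  have hcelldisj : ∀ ε ε', ε ≠ ε' → cell ε ⊓ cell ε' = ⊥ := by
    intro ε ε' hne
    rw [← SetLike.coe_set_eq]
    simp only [Clopens.coe_inf, Clopens.coe_bot]
    rw [Set.eq_empty_iff_forall_notMem]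
    rintro x ⟨hx, hx'⟩
    apply hne
    funext K
    have h1 := (hmemcell ε x).1 hx K
    have h2 := (hmemcell ε' x).1 hx' K
    by_cases b1 : ε K <;> by_cases b2 : ε' K <;> simp [b1, b2] at h1 h2 ⊢
    · exact h2 h1
    · exact h1 h2
  have hcellleT : ∀ ε (K : {K // K ∈ I}), ε K = true → ∀ x, x ∈ cell ε → x ∈ (K : Clopens X) := by
    intro ε K hb x hx
    have := (hmemcell ε x).1 hx K
    simpa [hb] using this
  have hcellleF : ∀ ε (K : {K // K ∈ I}), ε K = false → ∀ x, x ∈ cell ε → x ∉ (K : Clopens X) := by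
    intro ε K hb x hx
    have := (hmemcell ε x).1 hx K
    simpa [hb] using this
  -- decomposition of K ∈ I into cells
  have hdecomp : ∀ (K : {K // K ∈ I}),
      (Finset.univ.filter fun ε => ε K = true).sup cell = (K : Clopens X) := by
    intro K
    apply le_antisymm
    · apply Finset.sup_le
      intro ε hε
      rw [Finset.mem_filter] at hε
      exact clopens_le_iff.2 (hcellleT ε K hε.2)
    · rw [clopens_le_iff]
      intro x hx
      rw [clopens_mem_finset_sup]
      refine ⟨fun K => decide (x ∈ (K : Clopens X)), ?_, hpat x⟩
      simp [hx]
  -- nonempty cells and chosen points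
  set NE : Finset ({K // K ∈ I} → Bool) :=
    Finset.univ.filter fun ε => ((cell ε : Set X)).Nonempty with hNE
  have hpt : ∀ ε ∈ NE, ∃ m, h m ∈ cell ε := by
    intro ε hε
    rw [hNE, Finset.mem_filter] at hε
    obtain ⟨m, hm⟩ := hd.exists_mem_open (cell ε).isClopen.isOpen hε.2
    exact ⟨m, hm⟩
  set pt : {ε // ε ∈ NE} → M := fun ε => (hpt ε.1 ε.2).choose with hptdef
  have hptmem : ∀ ε : {ε // ε ∈ NE}, h (pt ε) ∈ cell ε.1 := fun ε => (hpt ε.1 ε.2).choose_spec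
  have hptinj : Function.Injective pt := by
    intro ε ε' he
    ext1
    by_contra hne
    have hbot := hcelldisj ε.1 ε'.1 hne
    have h1 := hptmem ε
    have h2 := hptmem ε'
    rw [he] at h1
    have hmem : h (pt ε') ∈ cell ε.1 ⊓ cell ε'.1 := by
      rw [← SetLike.mem_coe, Clopens.coe_inf]; exact ⟨h1, h2⟩
    rw [hbot] at hmem
    simp [← SetLike.mem_coe] at hmem
  -- empty cells are ⊥
  have hemptycell : ∀ ε, ε ∉ NE → cell ε = ⊥ := by
    intro ε hε
    rw [hNE, Finset.mem_filter] at hε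
    push_neg at hε
    have := hε (Finset.mem_univ ε)
    exact SetLike.coe_injective (by simpa using this)
  -- the finitely supported function
  set f : M →₀ S := ∑ ε ∈ NE.attach, Finsupp.single (pt ε) (μ.1 (cell ε.1)) with hf
  have hfval : ∀ ε : {ε // ε ∈ NE}, f (pt ε) = μ.1 (cell ε.1) := by
    intro ε
    rw [hf, Finsupp.finset_sum_apply]
    rw [Finset.sum_eq_single ε]
    · simp [Finsupp.single_apply]
    · intro ε' _ hne
      rw [Finsupp.single_apply, if_neg (fun e => hne (hptinj e))]
    · intro habs
      exact absurd (Finset.mem_attach _ _) habs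
  have hsupp : f.support ⊆ NE.attach.image pt := by
    rw [hf]
    refine (Finsupp.support_finset_sum).trans ?_
    intro m hm
    rw [Finset.mem_biUnion] at hm
    obtain ⟨ε, hε, hm⟩ := hm
    rw [Finset.mem_image]
    exact ⟨ε, hε, (Finset.mem_singleton.1 (Finsupp.support_single_subset hm)).symm⟩
  -- the sum defining the induced measure
  have hsum : ∀ K : Clopens X, (∑ m ∈ f.support, if h m ∈ K then f m else 0)
      = ∑ ε ∈ NE.attach, if h (pt ε) ∈ K then μ.1 (cell ε.1) else 0 := by
    intro K
    rw [Finset.sum_subset hsupp]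
    · rw [Finset.sum_image (fun a _ b _ e => hptinj e)]
      refine Finset.sum_congr rfl fun ε _ => ?_
      rw [hfval]
    · intro m _ hm
      rw [Finsupp.notMem_support_iff] at hm
      simp [hm]
  -- membership helpers
  have hmeminf : ∀ (x : X) (K L : Clopens X), x ∈ K ⊓ L ↔ x ∈ K ∧ x ∈ L := by
    intro x K L
    rw [← SetLike.mem_coe, Clopens.coe_inf]
    simp [← SetLike.mem_coe]
  have hmemsup : ∀ (x : X) (K L : Clopens X), x ∈ K ⊔ L ↔ x ∈ K ∨ x ∈ L := by
    intro x K L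
    rw [← SetLike.mem_coe, Clopens.coe_sup]
    simp [← SetLike.mem_coe]
  -- the induced measure
  set ν : Clopens X → S := fun K => ∑ m ∈ f.support, if h m ∈ K then f m else 0 with hν
  have hνmeas : IsSMeasure S X ν := by
    constructor
    · refine Finset.sum_eq_zero fun m _ => ?_
      rw [if_neg]
      simp [← SetLike.mem_coe]
    · intro K L hKL
      show (∑ m ∈ f.support, if h m ∈ K ⊔ L then f m else 0) = _
      rw [hν]
      simp only [← Finset.sum_add_distrib]
      refine Finset.sum_congr rfl fun m _ => ?_
      by_cases hK : h m ∈ K <;> by_cases hL : h m ∈ L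
      · exfalso
        have : h m ∈ K ⊓ L := (hmeminf _ K L).2 ⟨hK, hL⟩
        rw [hKL] at this
        simp [← SetLike.mem_coe] at this
      all_goals simp [hmemsup, hK, hL]
  -- agreement with μ on I
  have hagree : ∀ K ∈ I, ν K = μ.1 K := by
    intro K hK
    have hcond : ∀ ε : {ε // ε ∈ NE}, (h (pt ε) ∈ K) ↔ ε.1 ⟨K, hK⟩ = true := by
      intro ε
      constructor
      · intro hm
        by_contra hb
        rw [Bool.not_eq_true] at hb
        exact hcellleF ε.1 ⟨K, hK⟩ hb _ (hptmem ε) hm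
      · intro hb
        exact hcellleT ε.1 ⟨K, hK⟩ hb _ (hptmem ε)
    show (∑ m ∈ f.support, if h m ∈ K then f m else 0) = _
    rw [hsum K]
    calc ∑ ε ∈ NE.attach, (if h (pt ε) ∈ K then μ.1 (cell ε.1) else 0)
        = ∑ ε ∈ NE.attach, (if ε.1 ⟨K, hK⟩ = true then μ.1 (cell ε.1) else 0) := by
          refine Finset.sum_congr rfl fun ε _ => ?_
          rw [if_congr (hcond ε) rfl rfl]
      _ = ∑ ε ∈ NE, (if ε ⟨K, hK⟩ = true then μ.1 (cell ε) else 0) :=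
          Finset.sum_attach NE (fun ε => if ε ⟨K, hK⟩ = true then μ.1 (cell ε) else 0)
      _ = ∑ ε ∈ Finset.univ, (if ε ⟨K, hK⟩ = true then μ.1 (cell ε) else 0) := by
          apply Finset.sum_subset (Finset.subset_univ _)
          intro ε _ hε
          by_cases hb : ε ⟨K, hK⟩ = true
          · rw [if_pos hb, hemptycell ε hε, μ.2.1]
          · rw [if_neg hb]
      _ = ∑ ε ∈ Finset.univ.filter (fun ε => ε ⟨K, hK⟩ = true), μ.1 (cell ε) :=
          (Finset.sum_filter _ _).symm
      _ = μ.1 ((Finset.univ.filter fun ε => ε ⟨K, hK⟩ = true).sup cell) :=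
          (measure_finset_sup μ.2 _ _ (fun i _ j _ hij => hcelldisj i j hij)).symm
      _ = μ.1 K := by rw [hdecomp ⟨K, hK⟩]
  -- conclusion
  refine ⟨⟨ν, hνmeas⟩, ?_, ⟨f, fun K => rfl⟩⟩
  apply hsub
  intro K hK
  show ν K ∈ u K
  rw [hagree K (Finset.mem_coe.1 hK)]
  exact (hu K (Finset.mem_coe.1 hK)).2
end

section
/- Assume S is nontrivial (0 ≠ 1 in S). Then the map X → Meas_S(X) sending x to the Dirac measure δ_x is a topological embedding of X onto a closed subset of Meas_S(X). -/
open TopologicalSpace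

open scoped Classical in
/-- The Dirac measure at a point `x` of `X`: it sends a clopen `K` to `1` if `x ∈ K` and to
`0` otherwise. -/
noncomputable def diracMeas (S : Type*) [Semiring S] {X : Type*} [TopologicalSpace X]
    (x : X) : Clopens X → S :=
  fun K => if x ∈ K then 1 else 0

/-- The Dirac measure is an `S`-valued measure. -/
theorem isSMeasure_diracMeas (S : Type*) [Semiring S] {X : Type*} [TopologicalSpace X]
    (x : X) : IsSMeasure S X (diracMeas S x) := by
  classical
  refine ⟨?_, fun K L h => ?_⟩
  · show (if x ∈ (⊥ : Clopens X) then (1 : S) else 0) = 0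
    rw [if_neg]
    intro hx
    exact absurd hx (by simp [← SetLike.mem_coe])
  · show (if x ∈ K ⊔ L then (1 : S) else 0) = _
    have hdisj : ¬(x ∈ K ∧ x ∈ L) := by
      rintro ⟨hK, hL⟩
      have : x ∈ K ⊓ L := by simp [← SetLike.mem_coe] at hK hL ⊢; exact ⟨hK, hL⟩
      rw [h] at this
      exact absurd this (by simp [← SetLike.mem_coe])
    have hsup : x ∈ K ⊔ L ↔ x ∈ K ∨ x ∈ L := by
      simp [← SetLike.mem_coe]
    unfold diracMeas
    by_cases hK : x ∈ K <;> by_cases hL : x ∈ L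
    · exact absurd ⟨hK, hL⟩ hdisj
    · rw [if_pos (hsup.2 (Or.inl hK)), if_pos hK, if_neg hL, add_zero]
    · rw [if_pos (hsup.2 (Or.inr hL)), if_neg hK, if_pos hL, zero_add]
    · rw [if_neg (fun hx => (hsup.1 hx).elim hK hL), if_neg hK, if_neg hL, add_zero]

theorem continuous_diracMeas (S : Type*) [Semiring S] [TopologicalSpace S] {X : Type*}
    [TopologicalSpace X] : Continuous (diracMeas S : X → Clopens X → S) := by
  classical
  exact continuous_pi fun K =>
    continuous_if (by simp [K.isClopen.frontier_eq]) continuousOn_const continuousOn_const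

theorem diracMeas_injective {S : Type*} [Semiring S] {X : Type*} [TopologicalSpace X]
    [TotallySeparatedSpace X] (h01 : (0 : S) ≠ 1) :
    Function.Injective (diracMeas S : X → Clopens X → S) := by
  intro x y hxy
  by_contra hne
  obtain ⟨U, hU, hxU, hyU⟩ := exists_isClopen_of_totally_separated hne
  have hxK : x ∈ (⟨U, hU⟩ : Clopens X) := hxU
  have hyK : y ∉ (⟨U, hU⟩ : Clopens X) := hyU
  have hK_eval := congrFun hxy ⟨U, hU⟩
  rw [diracMeas, diracMeas, if_pos hxK, if_neg hyK] at hK_eval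
  exact h01 hK_eval.symm

theorem diracMeas_isClosedEmbedding_general (S X : Type*) [CommSemiring S]
    [TopologicalSpace S] [DiscreteTopology S]
    [TopologicalSpace X] [CompactSpace X] [T2Space X] [TotallyDisconnectedSpace X]
    (h01 : (0 : S) ≠ 1) :
    Topology.IsClosedEmbedding (fun x : X =>
      (⟨diracMeas S x, isSMeasure_diracMeas S x⟩ : SMeas S X)) :=
  -- Compact Hausdorff totally disconnected spaces are totally separated (an instance), and
  -- `SMeas S X` is Hausdorff as a subspace of a product of discrete spaces.
  ((continuous_diracMeas S).subtype_mk _).isClosedEmbedding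
    fun _ _ hxy => diracMeas_injective h01 (congrArg Subtype.val hxy)

/-- If `0 ≠ 1` in `S`, the map `X → Meas_S(X)` sending `x` to the Dirac
measure `δ_x` is a topological embedding of `X` onto a closed subset of `Meas_S(X)`. -/
theorem diracMeas_isClosedEmbedding (S X : Type*) [CommSemiring S] [Finite S]
    [TopologicalSpace S] [DiscreteTopology S]
    [TopologicalSpace X] [CompactSpace X] [T2Space X] [TotallyDisconnectedSpace X]
    (h01 : (0 : S) ≠ 1) :
    Topology.IsClosedEmbedding (fun x : X =>
      (⟨diracMeas S x, isSMeasure_diracMeas S x⟩ : SMeas S X)) :=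
  diracMeas_isClosedEmbedding_general S X h01
end

section
/- For every u ∈ A*, every L ⊆ (A×2)* and every k ∈ S: u⁻¹Q_k(L) = ⋃_{(k₁,k₂) ∈ S×S, k₁+k₂=k} ( Q_{k₁}(u₀⁻¹L) ∩ { w ∈ A* : m(u,w)·1_S = k₂ } ), where u⁻¹Q_k(L) := {w ∈ A* : uw ∈ Q_k(L)}, u₀⁻¹L := {v ∈ (A×2)* : u₀v ∈ L}, and m(u,w) is the cardinality of {1 ≤ i ≤ |u| : u^(i)·w₀ ∈ L} (with · denoting concatenation in (A×2)*). -/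
/-- The word over the marked alphabet `A × Bool` obtained from `w ∈ A*` by marking no
letter (`w₀` in the paper). -/
def unmarked {A : Type*} (w : FreeMonoid A) : FreeMonoid (A × Bool) :=
  FreeMonoid.map (fun a => (a, false)) w

/-- The word over the marked alphabet `A × Bool` obtained from `w ∈ A*` by marking exactly
the letter in (0-based) position `i` (`w⁽ⁱ⁾` in the paper, with 1-based indexing). -/
def markAt {A : Type*} (w : FreeMonoid A) (i : ℕ) : FreeMonoid (A × Bool) :=
  FreeMonoid.ofList (w.toList.mapIdx fun j a => (a, j == i))

/-- The quantified language `Q_k(L) ⊆ A*`, for `L ⊆ (A×2)*` and `k ∈ S`: it consists of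
the words `w` such that `m · 1_S = k` in `S`, where `m` is the number of positions `i` of
`w` with `w⁽ⁱ⁾ ∈ L`. -/
def Qlang (S : Type*) [Semiring S] {A : Type*} (k : S) (L : Set (FreeMonoid (A × Bool))) :
    Set (FreeMonoid A) :=
  {w | ({i | i < w.toList.length ∧ markAt w i ∈ L}.ncard : S) = k}

private lemma mapIdx_const {α β : Type*} (f : α → β) (l : List α) :
    (l.mapIdx fun _ a => f a) = l.map f := by
  induction l with
  | nil => simp
  | cons a l ih => simp [List.mapIdx_cons, ih]

private lemma mapIdx_congr {α β : Type*} {f g : ℕ → α → β} {l : List α}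
    (h : ∀ i < l.length, ∀ a, f i a = g i a) : l.mapIdx f = l.mapIdx g := by
  apply List.ext_getElem (by simp)
  intro i h1 h2
  simp only [List.getElem_mapIdx]
  exact h i (by simpa using h1) _

private lemma toList_unmarked {A : Type*} (w : FreeMonoid A) :
    (unmarked w).toList = w.toList.map (fun a => (a, false)) := rfl

private lemma markAt_mul_left {A : Type*} (u w : FreeMonoid A) {i : ℕ}
    (hi : i < u.toList.length) :
    markAt (u * w) i = markAt u i * unmarked w := by
  apply FreeMonoid.toList.injective
  show (FreeMonoid.toList (u * w)).mapIdx (fun j a => (a, j == i)) = _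
  rw [FreeMonoid.toList_mul, List.mapIdx_append, FreeMonoid.toList_mul]
  congr 1
  rw [toList_unmarked, ← mapIdx_const]
  apply mapIdx_congr
  intro j hj a
  simp only [Prod.mk.injEq, true_and]
  rw [Bool.eq_iff_iff, beq_iff_eq]
  simp only [Bool.false_eq_true, iff_false]
  omega

private lemma markAt_mul_right {A : Type*} (u w : FreeMonoid A) (j : ℕ) :
    markAt (u * w) (u.toList.length + j) = unmarked u * markAt w j := by
  apply FreeMonoid.toList.injective
  show (FreeMonoid.toList (u * w)).mapIdx
      (fun j' a => (a, j' == u.toList.length + j)) = _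
  rw [FreeMonoid.toList_mul, List.mapIdx_append, FreeMonoid.toList_mul]
  congr 1
  · rw [toList_unmarked, ← mapIdx_const]
    apply mapIdx_congr
    intro j' hj' a
    simp only [Prod.mk.injEq, true_and]
    rw [Bool.eq_iff_iff, beq_iff_eq]
    simp only [Bool.false_eq_true, iff_false]
    omega
  · show _ = (FreeMonoid.toList w).mapIdx (fun j' a => (a, j' == j))
    apply mapIdx_congr
    intro j' hj' a
    simp only [Prod.mk.injEq, true_and]
    rw [Bool.eq_iff_iff, beq_iff_eq, beq_iff_eq]
    omega

/-- For every `u ∈ A*`, `L ⊆ (A×2)*` and `k ∈ S`: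
`u⁻¹ Q_k(L) = ⋃_{k₁+k₂=k} ( Q_{k₁}(u₀⁻¹ L) ∩ {w : m(u,w)·1_S = k₂} )`, where
`u⁻¹Q_k(L) = {w : uw ∈ Q_k(L)}`, `u₀⁻¹L = {v : u₀ v ∈ L}` and `m(u,w)` is the number of
positions `i` of `u` with `u⁽ⁱ⁾ · w₀ ∈ L`. -/
theorem quot_Qlang_eq (S : Type*) [CommSemiring S] {A : Type*} [Finite A]
    (u : FreeMonoid A) (L : Set (FreeMonoid (A × Bool))) (k : S) :
    {w : FreeMonoid A | u * w ∈ Qlang S k L} =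
      ⋃ (k₁ : S) (k₂ : S) (_ : k₁ + k₂ = k),
        (Qlang S k₁ {v | unmarked u * v ∈ L} ∩
          {w : FreeMonoid A |
            ({i | i < u.toList.length ∧ markAt u i * unmarked w ∈ L}.ncard : S) = k₂}) := by
  ext w
  set TA := {i | i < u.toList.length ∧ markAt u i * unmarked w ∈ L} with hTA
  set TB := {j | j < w.toList.length ∧ unmarked u * markAt w j ∈ L} with hTB
  have hAfin : TA.Finite := (Set.finite_Iio u.toList.length).subset fun i hi => hi.1
  have hBfin : TB.Finite := (Set.finite_Iio w.toList.length).subset fun i hi => hi.1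
  have hsplit : {i | i < (u * w).toList.length ∧ markAt (u * w) i ∈ L} =
      TA ∪ ((· + u.toList.length) '' TB) := by
    ext i
    simp only [Set.mem_setOf_eq, Set.mem_union, Set.mem_image, FreeMonoid.toList_mul,
      List.length_append, hTA, hTB]
    constructor
    · rintro ⟨hlen, hmem⟩
      rcases lt_or_ge i u.toList.length with h | h
      · exact Or.inl ⟨h, by rwa [markAt_mul_left u w h] at hmem⟩
      · refine Or.inr ⟨i - u.toList.length, ⟨by omega, ?_⟩, by omega⟩
        have : u.toList.length + (i - u.toList.length) = i := by omega
        rwa [← this, markAt_mul_right] at hmem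
    · rintro (⟨h, hmem⟩ | ⟨j, ⟨hj, hmem⟩, rfl⟩)
      · exact ⟨by omega, by rwa [markAt_mul_left u w h]⟩
      · rw [Nat.add_comm j u.toList.length]
        exact ⟨by omega, by rwa [markAt_mul_right]⟩
    
  have hcard : {i | i < (u * w).toList.length ∧ markAt (u * w) i ∈ L}.ncard =
      TA.ncard + TB.ncard := by
    rw [hsplit, Set.ncard_union_eq ?_ hAfin (hBfin.image _),
      Set.ncard_image_of_injective _ (add_left_injective _)]
    rw [Set.disjoint_left]
    rintro i hi ⟨j, hj, hji⟩
    have hji' : j + u.toList.length = i := hji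
    have := hi.1; omega
  simp only [Set.mem_setOf_eq, Set.mem_iUnion, Qlang, Set.mem_inter_iff, hcard]
  constructor
  · rintro rfl
    exact ⟨(TB.ncard : S), (TA.ncard : S), by push_cast; ring, rfl, rfl⟩
  · rintro ⟨k₁, k₂, rfl, h₁, h₂⟩
    push_cast
    rw [h₁, h₂, add_comm]
end

section
/- Let S be a finite commutative semiring and let ℬ be a Boolean subalgebra of the powerset of (A×2)* that is closed under quotients. Let ℬ' be the Boolean subalgebra of the powerset of A* generated by the languages Q_k(L) for k ∈ S and L ∈ ℬ together with the languages L₀ := {w ∈ A* : w₀ ∈ L} for L ∈ ℬ. Then ℬ' is closed under quotients. -/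
/-- Membership in the Boolean subalgebra of `Set α` generated by a family `G` of subsets
of `α`. -/
inductive BoolGen {α : Type*} (G : Set (Set α)) : Set α → Prop
  | basic {s : Set α} : s ∈ G → BoolGen G s
  | empty : BoolGen G ∅
  | compl {s : Set α} : BoolGen G s → BoolGen G sᶜ
  | union {s t : Set α} : BoolGen G s → BoolGen G t → BoolGen G (s ∪ t)

/-! Quotienting by `u` and `v` commutes with the Boolean operations, so it suffices to quotient
the generators. For `L₀` the quotient is `(u₀⁻¹ L v₀⁻¹)₀`. For `Q_k(L)`, the marked positions of
`uwv` fall into `u`, `w` or `v`: those in `w` are counted by the count of `u₀⁻¹ L v₀⁻¹` on `w`,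
and each of the boundedly many positions in `u` or `v` contributes the indicator of a language
`K₀` with `K` a quotient of `L`. As `S` is finite, the fibres of the `S`-valued image of a sum of
counts are finite unions of intersections of fibres of the summands. -/

open MeasureTheory Finset

namespace BoolGen

variable {α β : Type*} {G : Set (Set α)}

theorem isSetAlgebra : IsSetAlgebra {s | BoolGen G s} where
  empty_mem := empty
  compl_mem _ hs := hs.compl
  union_mem _ _ hs ht := hs.union ht

theorem preimage {H : Set (Set β)} {f : β → α} (hG : ∀ s ∈ G, BoolGen H (f ⁻¹' s))
    {s : Set α} (hs : BoolGen G s) : BoolGen H (f ⁻¹' s) := by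
  induction hs with
  | basic h => exact hG _ h
  | empty => exact empty
  | compl _ ih => exact ih.compl
  | union _ _ ihs iht => exact ihs.union iht

theorem iUnion {ι : Type*} [Finite ι] {s : ι → Set α} (hs : ∀ i, BoolGen G (s i)) :
    BoolGen G (⋃ i, s i) := by
  have := Fintype.ofFinite ι
  have h := isSetAlgebra.biUnion_mem Finset.univ fun i _ => hs i
  simp only [Finset.mem_univ, Set.iUnion_true] at h
  exact h

end BoolGen

def HasBoolGenFibres (S : Type*) [Semiring S] {α : Type*} (G : Set (Set α)) (f : α → ℕ) :
    Prop :=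
  ∀ k : S, BoolGen G {x | (f x : S) = k}

section HasBoolGenFibres

variable {S α ι : Type*} [Semiring S] {G : Set (Set α)}

theorem hasBoolGenFibres_const (n : ℕ) : HasBoolGenFibres S G fun _ => n := by
  intro k
  by_cases h : (n : S) = k
  · simpa [h] using (BoolGen.isSetAlgebra (G := G)).univ_mem
  · simpa [h] using BoolGen.empty

theorem hasBoolGenFibres_indicator {s : Set α} (hs : BoolGen G s) :
    HasBoolGenFibres S G (s.indicator 1) := by
  intro k
  have hfibre : {x | (s.indicator 1 x : ℕ) = (k : S)}
      = s ∩ {_x | ((1 : ℕ) : S) = k} ∪ sᶜ ∩ {_x | ((0 : ℕ) : S) = k} := by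
    ext x
    by_cases hx : x ∈ s <;> simp [hx]
  rw [hfibre]
  exact (BoolGen.isSetAlgebra.inter_mem hs (hasBoolGenFibres_const 1 k)).union
    (BoolGen.isSetAlgebra.inter_mem hs.compl (hasBoolGenFibres_const 0 k))

theorem HasBoolGenFibres.add [Finite S] {f g : α → ℕ} (hf : HasBoolGenFibres S G f)
    (hg : HasBoolGenFibres S G g) : HasBoolGenFibres S G fun x => f x + g x := by
  intro k
  have hfibre : {x | ((f x + g x : ℕ) : S) = k}
      = ⋃ p : {p : S × S // p.1 + p.2 = k}, {x | (f x : S) = p.1.1} ∩ {x | (g x : S) = p.1.2} := by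
    ext x
    simp only [Set.mem_ofPred_eq, Set.mem_iUnion, Set.mem_inter_iff, Nat.cast_add]
    constructor
    · intro hx
      exact ⟨⟨(f x, g x), hx⟩, rfl, rfl⟩
    · rintro ⟨⟨p, hp⟩, hf, hg⟩
      rw [hf, hg, hp]
  rw [hfibre]
  exact BoolGen.iUnion fun p => BoolGen.isSetAlgebra.inter_mem (hf _) (hg _)

theorem hasBoolGenFibres_sum [Finite S] (t : Finset ι) {f : ι → α → ℕ}
    (hf : ∀ i ∈ t, HasBoolGenFibres S G (f i)) :
    HasBoolGenFibres S G fun x => ∑ i ∈ t, f i x := by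
  classical
  induction t using Finset.induction with
  | empty => simpa using hasBoolGenFibres_const 0
  | insert a t ha ih =>
    simp only [Finset.sum_insert ha]
    exact (hf a (mem_insert_self a t)).add (ih fun i hi => hf i (mem_insert_of_mem hi))

end HasBoolGenFibres

section Words

variable {A : Type*}

theorem unmarked_mul (u w : FreeMonoid A) : unmarked (u * w) = unmarked u * unmarked w :=
  map_mul _ u w

theorem markAt_mul_of_lt (u w : FreeMonoid A) {i : ℕ} (hi : i < u.toList.length) :
    markAt (u * w) i = markAt u i * unmarked w := by
  apply FreeMonoid.toList.injective
  simp only [markAt, unmarked, FreeMonoid.toList_mul, FreeMonoid.toList_ofList,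
    FreeMonoid.toList_map, List.mapIdx_append]
  congr 1
  refine List.ext_getElem (by simp) fun n hn _ => ?_
  simp only [List.getElem_mapIdx, List.getElem_map, Prod.mk.injEq, beq_eq_false_iff_ne, ne_eq,
    true_and]
  omega

theorem markAt_mul_add (u w : FreeMonoid A) (j : ℕ) :
    markAt (u * w) (u.toList.length + j) = unmarked u * markAt w j := by
  apply FreeMonoid.toList.injective
  simp only [markAt, unmarked, FreeMonoid.toList_mul, FreeMonoid.toList_ofList,
    FreeMonoid.toList_map, List.mapIdx_append]
  congr 1 <;> refine List.ext_getElem (by simp) fun n hn _ => ?_ <;>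
    simp only [List.length_mapIdx, List.getElem_mapIdx, List.getElem_map, Prod.mk.injEq,
      beq_eq_false_iff_ne, ne_eq, beq_eq_beq, true_and] at hn ⊢ <;> omega

noncomputable def markCount (L : Set (FreeMonoid (A × Bool))) (w : FreeMonoid A) : ℕ :=
  ∑ i ∈ range w.toList.length, L.indicator 1 (markAt w i)

theorem markCount_mul (L : Set (FreeMonoid (A × Bool))) (u w : FreeMonoid A) :
    markCount L (u * w) = ∑ i ∈ range u.toList.length, L.indicator 1 (markAt u i * unmarked w)
      + ∑ j ∈ range w.toList.length, L.indicator 1 (unmarked u * markAt w j) := by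
  rw [markCount, FreeMonoid.toList_mul, List.length_append, sum_range_add]
  congr 1
  · refine sum_congr rfl fun i hi => ?_
    rw [markAt_mul_of_lt u w (mem_range.mp hi)]
  · simp only [markAt_mul_add]

theorem markCount_mul_mul (L : Set (FreeMonoid (A × Bool))) (u w v : FreeMonoid A) :
    markCount L (u * w * v) =
      ∑ i ∈ range u.toList.length, L.indicator 1 (markAt u i * unmarked w * unmarked v)
      + markCount {x | unmarked u * x * unmarked v ∈ L} w
      + ∑ j ∈ range v.toList.length, L.indicator 1 (unmarked u * unmarked w * markAt v j) := by
  have hleft : ∑ i ∈ range (u * w).toList.length, L.indicator 1 (markAt (u * w) i * unmarked v)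
      = markCount {x | x * unmarked v ∈ L} (u * w) := rfl
  rw [markCount_mul, hleft, markCount_mul, unmarked_mul]
  rfl

theorem ncard_setOf_markAt_mem (L : Set (FreeMonoid (A × Bool))) (w : FreeMonoid A) :
    {i | i < w.toList.length ∧ markAt w i ∈ L}.ncard = markCount L w := by
  classical
  have hfin : {i | i < w.toList.length ∧ markAt w i ∈ L}
      = ↑((range w.toList.length).filter fun i => markAt w i ∈ L) := by
    ext; simp
  rw [hfin, Set.ncard_coe_finset, card_filter, markCount]
  simp [Set.indicator_apply]

theorem Qlang_eq_setOf_markCount (S : Type*) [Semiring S] (k : S)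
    (L : Set (FreeMonoid (A × Bool))) : Qlang S k L = {w | (markCount L w : S) = k} := by
  simp only [Qlang, ncard_setOf_markAt_mem]

end Words

section Quantifiers

variable {A S : Type*} [Semiring S] {ℬ : Set (Set (FreeMonoid (A × Bool)))}

variable (S) in
def quantGenerators (ℬ : Set (Set (FreeMonoid (A × Bool)))) : Set (Set (FreeMonoid A)) :=
  {T | ∃ k : S, ∃ L ∈ ℬ, T = Qlang S k L} ∪ {T | ∃ L ∈ ℬ, T = {w | unmarked w ∈ L}}

theorem boolGen_setOf_unmarked_mem {L : Set (FreeMonoid (A × Bool))} (hL : L ∈ ℬ) :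
    BoolGen (quantGenerators S ℬ) {w | unmarked w ∈ L} :=
  .basic (Or.inr ⟨L, hL, rfl⟩)

theorem hasBoolGenFibres_markCount {L : Set (FreeMonoid (A × Bool))} (hL : L ∈ ℬ) :
    HasBoolGenFibres S (quantGenerators S ℬ) (markCount L) :=
  fun k => .basic (Or.inl ⟨k, L, hL, (Qlang_eq_setOf_markCount S k L).symm⟩)

theorem boolGen_preimage_mul_mul [Finite S]
    (hquot : ∀ L ∈ ℬ, ∀ u v : FreeMonoid (A × Bool), {w | u * w * v ∈ L} ∈ ℬ)
    {T : Set (FreeMonoid A)} (hT : T ∈ quantGenerators S ℬ) (u v : FreeMonoid A) :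
    BoolGen (quantGenerators S ℬ) ((fun w => u * w * v) ⁻¹' T) := by
  rcases hT with ⟨k, L, hL, rfl⟩ | ⟨L, hL, rfl⟩
  · have hcount : HasBoolGenFibres S (quantGenerators S ℬ) fun w => markCount L (u * w * v) := by
      simp only [markCount_mul_mul]
      refine ((hasBoolGenFibres_sum _ fun i _ => ?_).add
        (hasBoolGenFibres_markCount (hquot L hL _ _))).add (hasBoolGenFibres_sum _ fun j _ => ?_)
      · exact hasBoolGenFibres_indicator
          (boolGen_setOf_unmarked_mem (hquot L hL (markAt u i) (unmarked v)))
      · exact hasBoolGenFibres_indicator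
          (boolGen_setOf_unmarked_mem (hquot L hL (unmarked u) (markAt v j)))
    rw [Qlang_eq_setOf_markCount]
    exact hcount k
  · have hpre : (fun w => u * w * v) ⁻¹' {w | unmarked w ∈ L}
        = {w | unmarked w ∈ {x | unmarked u * x * unmarked v ∈ L}} := by
      ext w
      simp only [Set.mem_preimage, Set.mem_ofPred_eq, unmarked_mul]
    rw [hpre]
    exact boolGen_setOf_unmarked_mem (hquot L hL (unmarked u) (unmarked v))

end Quantifiers

theorem BoolGen_quant_closed_under_quotients_general (S : Type*) [CommSemiring S] [Finite S]
    {A : Type*} (ℬ : Set (Set (FreeMonoid (A × Bool))))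
    (hquot : ∀ L ∈ ℬ, ∀ u v : FreeMonoid (A × Bool), {w | u * w * v ∈ L} ∈ ℬ) :
    ∀ L' : Set (FreeMonoid A),
      BoolGen ({T | ∃ k : S, ∃ L ∈ ℬ, T = Qlang S k L} ∪
          {T | ∃ L ∈ ℬ, T = {w | unmarked w ∈ L}}) L' →
        ∀ u v : FreeMonoid A,
          BoolGen ({T | ∃ k : S, ∃ L ∈ ℬ, T = Qlang S k L} ∪
              {T | ∃ L ∈ ℬ, T = {w | unmarked w ∈ L}}) {w | u * w * v ∈ L'} :=
  fun _ hL' u v => hL'.preimage fun _ hT => boolGen_preimage_mul_mul hquot hT u v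

/-- Let `S` be a finite commutative semiring and `ℬ` a Boolean subalgebra
of the powerset of `(A×2)*` closed under quotients.  Let `ℬ'` be the Boolean subalgebra of
the powerset of `A*` generated by the languages `Q_k(L)` (`k ∈ S`, `L ∈ ℬ`) together with
the languages `L₀ = {w : w₀ ∈ L}` (`L ∈ ℬ`).  Then `ℬ'` is closed under quotients. -/
theorem BoolGen_quant_closed_under_quotients (S : Type*) [CommSemiring S] [Finite S]
    {A : Type*} [Finite A] (ℬ : Set (Set (FreeMonoid (A × Bool))))
    (hempty : ∅ ∈ ℬ)
    (hcompl : ∀ L ∈ ℬ, Lᶜ ∈ ℬ)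
    (hunion : ∀ L ∈ ℬ, ∀ L' ∈ ℬ, L ∪ L' ∈ ℬ)
    (hquot : ∀ L ∈ ℬ, ∀ u v : FreeMonoid (A × Bool), {w | u * w * v ∈ L} ∈ ℬ) :
    ∀ L' : Set (FreeMonoid A),
      BoolGen ({T | ∃ k : S, ∃ L ∈ ℬ, T = Qlang S k L} ∪
          {T | ∃ L ∈ ℬ, T = {w | unmarked w ∈ L}}) L' →
        ∀ u v : FreeMonoid A,
          BoolGen ({T | ∃ k : S, ∃ L ∈ ℬ, T = Qlang S k L} ∪
              {T | ∃ L ∈ ℬ, T = {w | unmarked w ∈ L}}) {w | u * w * v ∈ L'} :=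
  BoolGen_quant_closed_under_quotients_general S ℬ hquot
end
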